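/- arXiv:1802.05558 — 2 statements merged into one kernel-verified Lean document; each statement's English description precedes it below -/
import Mathlib

section
/- Let a, c_1, c_2, c_3 be nonnegative real numbers with 1 ≤ a < 2 and c_1c_2c_3 ≥ (2−a)³. Then the map Φ_{[a;c_1,c_2,c_3]} : M_3(ℂ) → M_3(ℂ) defined by Φ(X)_{11}=a·x_{11}+c_1·x_{33}, Φ(X)_{22}=c_2·x_{11}+a·x_{22}, Φ(X)_{33}=c_3·x_{22}+a·x_{33}, and Φ(X)_{ij}=−x_{ij} for i≠j, is indecomposable. -/
open Matrix
open scoped ComplexOrder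

noncomputable section

/-- A map between complex matrix algebras is positive if it maps positive semidefinite
matrices to positive semidefinite matrices. -/
def IsPosMap {m n : ℕ} (Φ : Matrix (Fin m) (Fin m) ℂ → Matrix (Fin n) (Fin n) ℂ) : Prop :=
  ∀ X, X.PosSemidef → (Φ X).PosSemidef

/-- Blockwise application of a map `Φ : M_m → M_n` to a matrix in `M_k(M_m)`:
`Φ_k (X_{ij}) = (Φ(X_{ij}))`. -/
def blockApply {m n : ℕ} (k : ℕ)
    (Φ : Matrix (Fin m) (Fin m) ℂ → Matrix (Fin n) (Fin n) ℂ)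
    (X : Matrix (Fin k × Fin m) (Fin k × Fin m) ℂ) :
    Matrix (Fin k × Fin n) (Fin k × Fin n) ℂ :=
  Matrix.of fun p q => Φ (Matrix.of fun i j => X (p.1, i) (q.1, j)) p.2 q.2

/-- `Φ` is completely positive if it is `k`-positive for every `k`, i.e. the blockwise
application of `Φ` to `M_k(M_m)` is a positive map for every `k`. -/
def IsCompletelyPositive {m n : ℕ}
    (Φ : Matrix (Fin m) (Fin m) ℂ → Matrix (Fin n) (Fin n) ℂ) : Prop :=
  ∀ k : ℕ, ∀ X : Matrix (Fin k × Fin m) (Fin k × Fin m) ℂ,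
    X.PosSemidef → (blockApply k Φ X).PosSemidef

/-- `Φ` is decomposable if it is the sum of a completely positive linear map and a
completely copositive linear map. -/
def IsDecomposable {m n : ℕ}
    (Φ : Matrix (Fin m) (Fin m) ℂ → Matrix (Fin n) (Fin n) ℂ) : Prop :=
  ∃ Φ₁ Φ₂ : Matrix (Fin m) (Fin m) ℂ → Matrix (Fin n) (Fin n) ℂ,
    IsLinearMap ℂ Φ₁ ∧ IsLinearMap ℂ Φ₂ ∧
    IsCompletelyPositive Φ₁ ∧ IsCompletelyPositive (fun X => (Φ₂ X)ᵀ) ∧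
    ∀ X, Φ X = Φ₁ X + Φ₂ X

/-- The Choi matrix of `Φ`: `C_Φ = (Φ(E_{ij}))_{i,j}` as an element of `M_m ⊗ M_n`. -/
def choiMatrix {m n : ℕ} (Φ : Matrix (Fin m) (Fin m) ℂ → Matrix (Fin n) (Fin n) ℂ) :
    Matrix (Fin m × Fin n) (Fin m × Fin n) ℂ :=
  Matrix.of fun p q => Φ (Matrix.single p.1 q.1 1) p.2 q.2

/-- The simple tensor `ξ ⊗ η` of two vectors. -/
def tensorVec {m n : ℕ} (ξ : Fin m → ℂ) (η : Fin n → ℂ) : Fin m × Fin n → ℂ :=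
  fun p => ξ p.1 * η p.2

/-- The partial transposition `(id ⊗ transpose)` on `M_m ⊗ M_n`. -/
def partialTranspose {m n : ℕ} (ρ : Matrix (Fin m × Fin n) (Fin m × Fin n) ℂ) :
    Matrix (Fin m × Fin n) (Fin m × Fin n) ℂ :=
  Matrix.of fun p q => ρ (p.1, q.2) (q.1, p.2)

/-- The Choi-like map `Φ_A` associated to a matrix `A` of coefficients: the `i`-th diagonal
entry of `Φ_A(X)` is `∑ k, A i k * x_{kk}` and the off-diagonal entries are `-x_{ij}`. -/
def PhiMap {n : ℕ} (A : Matrix (Fin n) (Fin n) ℝ) (X : Matrix (Fin n) (Fin n) ℂ) :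
    Matrix (Fin n) (Fin n) ℂ :=
  Matrix.of fun i j => if i = j then ∑ k, (A i k : ℂ) * X k k else -X i j

/-- The generalized Choi map `Φ_{[a,b,c]}` of Cho, Kye and Lee. -/
def genChoiMap (a b c : ℝ) : Matrix (Fin 3) (Fin 3) ℂ → Matrix (Fin 3) (Fin 3) ℂ :=
  PhiMap !![a, b, c; c, a, b; b, c, a]

/-- Kye's map `Φ_{[a; c₁, c₂, c₃]}`. -/
def kyeMap (a c₁ c₂ c₃ : ℝ) : Matrix (Fin 3) (Fin 3) ℂ → Matrix (Fin 3) (Fin 3) ℂ :=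
  PhiMap !![a, 0, c₁; c₂, a, 0; 0, c₃, a]

/-- The diagonal map `Δ_A(X) = diag(∑_j (a_{ij} + δ_{ij}) x_{jj})_i`. -/
def DeltaMap {n : ℕ} (A : Matrix (Fin n) (Fin n) ℝ) (X : Matrix (Fin n) (Fin n) ℂ) :
    Matrix (Fin n) (Fin n) ℂ :=
  Matrix.diagonal (fun i => ∑ j, ((A i j : ℂ) + if i = j then 1 else 0) * X j j)

/-- The map `Φ_A(X) = Δ_A(X) - X`. -/
def PhiDelta {n : ℕ} (A : Matrix (Fin n) (Fin n) ℝ) (X : Matrix (Fin n) (Fin n) ℂ) :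
    Matrix (Fin n) (Fin n) ℂ :=
  DeltaMap A X - X

/-!
The Choi matrix of a decomposable map is `P + Q` with `P` and the partial transpose `Qᴳ`
positive semidefinite. Partial transposition preserves the trace pairing, so
`tr (ρ C_Φ) ≥ 0` for every PPT matrix `ρ` (`ρ ≥ 0` and `ρᴳ ≥ 0`).

For `u ≠ 0` the matrix `ρ_u = |e⟩⟨e| + Σᵢ (u² |i,i+1⟩⟨i,i+1| + u⁻² |i+1,i⟩⟨i+1,i|)`, with
`e = Σᵢ |i,i⟩` and indices mod 3, is PPT: its partial transpose is the sum of the rank-one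
matrices `|w_i⟩⟨w_i|`, `w_i = u |i,i+1⟩ + u⁻¹ |i+1,i⟩`, and of the projections `|i,i⟩⟨i,i|`.
Pairing it with the Choi matrix of Kye's map gives `3a - 6 + u² (c₁ + c₂ + c₃)`, which is
negative for small `u` because `a < 2`.
-/

open scoped MatrixOrder in
theorem Matrix.PosSemidef.trace_mul_nonneg {𝕜 ι : Type*} [RCLike 𝕜] [Fintype ι]
    {A B : Matrix ι ι 𝕜} (hA : A.PosSemidef) (hB : B.PosSemidef) : 0 ≤ (A * B).trace := by
  classical
  obtain ⟨C, rfl⟩ := CStarAlgebra.nonneg_iff_eq_star_mul_self.mp hA.nonneg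
  rw [mul_assoc, trace_mul_comm, star_eq_conjTranspose]
  exact (hB.mul_mul_conjTranspose_same C).trace_nonneg

section Choi

variable {m n : ℕ}

theorem trace_partialTranspose_mul_partialTranspose
    (ρ M : Matrix (Fin m × Fin n) (Fin m × Fin n) ℂ) :
    (partialTranspose ρ * partialTranspose M).trace = (ρ * M).trace := by
  simp only [Matrix.trace, diag, mul_apply, partialTranspose, of_apply, Fintype.sum_prod_type]
  refine Finset.sum_congr rfl fun _ _ => ?_
  rw [Finset.sum_comm]
  exact (Finset.sum_congr rfl fun _ _ => Finset.sum_comm).trans Finset.sum_comm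

def maxEntangledVec (m : ℕ) : Fin m × Fin m → ℂ := fun p => if p.1 = p.2 then 1 else 0

theorem blockApply_vecMulVec_maxEntangledVec
    (Φ : Matrix (Fin m) (Fin m) ℂ → Matrix (Fin n) (Fin n) ℂ) :
    blockApply m Φ (vecMulVec (maxEntangledVec m) (star (maxEntangledVec m))) =
      choiMatrix Φ := by
  ext p q
  simp only [blockApply, choiMatrix, of_apply]
  congr 2
  ext i j
  simp only [vecMulVec_apply, maxEntangledVec, Pi.star_apply, RCLike.star_def,
    MonoidWithZeroHom.map_ite_one_zero, mul_ite, mul_one, mul_zero]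
  split_ifs <;> tauto

theorem IsCompletelyPositive.choiMatrix_posSemidef
    {Φ : Matrix (Fin m) (Fin m) ℂ → Matrix (Fin n) (Fin n) ℂ} (hΦ : IsCompletelyPositive Φ) :
    (choiMatrix Φ).PosSemidef :=
  blockApply_vecMulVec_maxEntangledVec Φ ▸ hΦ m _ (posSemidef_vecMulVec_self_star _)

theorem choiMatrix_add (Φ₁ Φ₂ : Matrix (Fin m) (Fin m) ℂ → Matrix (Fin n) (Fin n) ℂ) :
    choiMatrix (Φ₁ + Φ₂) = choiMatrix Φ₁ + choiMatrix Φ₂ :=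
  rfl

theorem choiMatrix_transpose (Φ : Matrix (Fin m) (Fin m) ℂ → Matrix (Fin n) (Fin n) ℂ) :
    choiMatrix (fun X => (Φ X)ᵀ) = partialTranspose (choiMatrix Φ) :=
  rfl

theorem IsDecomposable.trace_mul_choiMatrix_nonneg
    {Φ : Matrix (Fin m) (Fin m) ℂ → Matrix (Fin n) (Fin n) ℂ} (hΦ : IsDecomposable Φ)
    {ρ : Matrix (Fin m × Fin n) (Fin m × Fin n) ℂ} (hρ : ρ.PosSemidef)
    (hρΓ : (partialTranspose ρ).PosSemidef) :
    0 ≤ (ρ * choiMatrix Φ).trace := by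
  obtain ⟨Φ₁, Φ₂, -, -, hΦ₁, hΦ₂, hsum⟩ := hΦ
  obtain rfl : Φ = Φ₁ + Φ₂ := funext hsum
  rw [choiMatrix_add, mul_add, trace_add,
    ← trace_partialTranspose_mul_partialTranspose ρ (choiMatrix Φ₂), ← choiMatrix_transpose]
  exact add_nonneg (hρ.trace_mul_nonneg hΦ₁.choiMatrix_posSemidef)
    (hρΓ.trace_mul_nonneg hΦ₂.choiMatrix_posSemidef)

end Choi

def kyeState (u : ℝ) : Matrix (Fin 3 × Fin 3) (Fin 3 × Fin 3) ℂ :=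
  vecMulVec (maxEntangledVec 3) (star (maxEntangledVec 3)) +
    diagonal fun p =>
      ((if p.2 = p.1 + 1 then u ^ 2 else if p.1 = p.2 + 1 then u⁻¹ ^ 2 else 0 : ℝ) : ℂ)

theorem kyeState_posSemidef (u : ℝ) : (kyeState u).PosSemidef :=
  (posSemidef_vecMulVec_self_star _).add <| .diagonal fun _ =>
    Complex.zero_le_real.mpr (by split_ifs <;> positivity)

def kyeStatePartialTransposeVec (u : ℝ) (i : Fin 3) : Fin 3 × Fin 3 → ℂ :=
  Pi.single (i, i + 1) (u : ℂ) + Pi.single (i + 1, i) (u⁻¹ : ℂ)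

theorem partialTranspose_kyeState {u : ℝ} (hu : u ≠ 0) :
    partialTranspose (kyeState u) =
      (∑ i, vecMulVec (kyeStatePartialTransposeVec u i)
        (star (kyeStatePartialTransposeVec u i))) +
        diagonal fun p => if p.1 = p.2 then 1 else 0 := by
  have hu' : (u : ℂ) ≠ 0 := by exact_mod_cast hu
  ext ⟨p₁, p₂⟩ ⟨q₁, q₂⟩
  fin_cases p₁ <;> fin_cases p₂ <;> fin_cases q₁ <;> fin_cases q₂ <;>
    simp [partialTranspose, kyeState, kyeStatePartialTransposeVec, maxEntangledVec,
      vecMulVec_apply, Fin.sum_univ_three, diagonal_apply, hu', sq]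

theorem partialTranspose_kyeState_posSemidef {u : ℝ} (hu : u ≠ 0) :
    (partialTranspose (kyeState u)).PosSemidef := by
  rw [partialTranspose_kyeState hu]
  refine (posSemidef_sum _ fun i _ => posSemidef_vecMulVec_self_star _).add <|
    .diagonal fun _ => ?_
  split_ifs <;> norm_num

theorem trace_kyeState_mul_choiMatrix_kyeMap (u a c₁ c₂ c₃ : ℝ) :
    (kyeState u * choiMatrix (kyeMap a c₁ c₂ c₃)).trace =
      ((3 * a - 6 + u ^ 2 * (c₁ + c₂ + c₃) : ℝ) : ℂ) := by
  simp only [trace, kyeState, Fin.isValue, inv_pow, choiMatrix, kyeMap, PhiMap, of_apply,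
    cons_val', cons_val_fin_one, single_apply, mul_ite, mul_one, mul_zero, Fin.sum_univ_three,
    cons_val_zero, cons_val_one, cons_val, diag_apply, mul_apply, Matrix.add_apply,
    vecMulVec_apply, maxEntangledVec, Pi.star_apply, RCLike.star_def,
    MonoidWithZeroHom.map_ite_one_zero, diagonal_apply, mul_neg, Fintype.sum_prod_type,
    Complex.ofReal_zero, ite_self, add_zero, zero_add, ↓reduceIte, true_and, Fin.reduceEq,
    false_and, zero_ne_one, ite_mul, zero_mul, neg_zero, one_ne_zero, Prod.mk.injEq, and_true,
    and_false, right_eq_add, Fin.reduceAdd, one_mul, Complex.ofReal_pow, Complex.ofReal_add,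
    Complex.ofReal_sub, Complex.ofReal_mul, Complex.ofReal_ofNat]
  ring

open Topology in
theorem exists_ne_zero_sq_mul_lt (s : ℝ) {ε : ℝ} (hε : 0 < ε) :
    ∃ u : ℝ, u ≠ 0 ∧ u ^ 2 * s < ε := by
  have hlt : ∀ᶠ u in 𝓝 (0 : ℝ), u ^ 2 * s < ε :=
    (by fun_prop : Continuous fun u : ℝ => u ^ 2 * s).continuousAt.eventually_lt
      continuousAt_const (by simpa using hε)
  have hne : ∀ᶠ u in 𝓝[≠] (0 : ℝ), u ≠ 0 := eventually_mem_nhdsWithin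
  exact (hne.and (hlt.filter_mono nhdsWithin_le_nhds)).exists

theorem kyeMap_indecomposable_general (a c₁ c₂ c₃ : ℝ)
    (ha2 : a < 2) :
    ¬ IsDecomposable (kyeMap a c₁ c₂ c₃) := by
  intro hΦ
  obtain ⟨u, hu, hsmall⟩ :=
    exists_ne_zero_sq_mul_lt (c₁ + c₂ + c₃) (by linarith : 0 < 3 * (2 - a))
  have hpair := hΦ.trace_mul_choiMatrix_nonneg (kyeState_posSemidef u)
    (partialTranspose_kyeState_posSemidef hu)
  rw [trace_kyeState_mul_choiMatrix_kyeMap, Complex.zero_le_real] at hpair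
  linarith

/-- If `1 ≤ a < 2` and `c₁c₂c₃ ≥ (2-a)³`, then Kye's map
`Φ_{[a;c₁,c₂,c₃]}` is indecomposable. -/
theorem kyeMap_indecomposable (a c₁ c₂ c₃ : ℝ)
    (hc₁ : 0 ≤ c₁) (hc₂ : 0 ≤ c₂) (hc₃ : 0 ≤ c₃)
    (ha1 : 1 ≤ a) (ha2 : a < 2) (hc : (2 - a) ^ 3 ≤ c₁ * c₂ * c₃) :
    ¬ IsDecomposable (kyeMap a c₁ c₂ c₃) :=
  kyeMap_indecomposable_general a c₁ c₂ c₃ ha2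
end
end

section
/- Let n ≥ 2 and let A = (a_{ij}) be an n×n real matrix with nonnegative entries such that (1/(n−1))·√(a_{ii}a_{jj}) + √(a_{ij}a_{ji}) ≥ 1 for all i ≠ j. Then the map Φ_A(X) = Δ_A(X) − X is positive. -/
open Matrix
open scoped ComplexOrder

noncomputable section

/-! For a positive semidefinite `X` and a vector `y` put `r i = √(x i i)` and `s i = ‖y i‖`.
Since `‖x i j‖ ≤ r i * r j`, we get `⟪y, X y⟫ ≤ (∑ i, r i * s i) ^ 2`, whereas
`⟪y, Δ_A(X) y⟫ = ∑ i, s i ^ 2 * ∑ j, (a i j + δ i j) * r j ^ 2`. Expanding the square, the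
hypothesis and AM-GM (once for `√(a i i * a j j)`, once for `√(a i j * a j i)`) bound each cross
term by the average of `a i i * (r i * s i) ^ 2 / (n - 1) + a i j * (r j * s i) ^ 2` and its
transpose; summed over `j ≠ i`, the first summand contributes exactly `a i i * (r i * s i) ^ 2`. -/

theorem Real.sqrt_mul_mul_mul_le_add_div_two {a b : ℝ} (ha : 0 ≤ a) (hb : 0 ≤ b) (x y : ℝ) :
    √(a * b) * (x * y) ≤ (a * x ^ 2 + b * y ^ 2) / 2 := by
  have := two_mul_le_add_sq (√a * x) (√b * y)
  rw [mul_pow, mul_pow, Real.sq_sqrt ha, Real.sq_sqrt hb] at this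
  rw [Real.sqrt_mul ha]
  linarith [show √a * √b * (x * y) = √a * x * (√b * y) by ring]

theorem Finset.sq_sum_le_sum_sum_of_mul_le {ι : Type*} [Fintype ι] (u : ι → ℝ)
    (G : ι → ι → ℝ) (h : ∀ i j, u i * u j ≤ (G i j + G j i) / 2) :
    (∑ i, u i) ^ 2 ≤ ∑ i, ∑ j, G i j := by
  calc (∑ i, u i) ^ 2 = ∑ i, ∑ j, u i * u j := by rw [sq, Finset.sum_mul_sum]
    _ ≤ ∑ i, ∑ j, (G i j + G j i) / 2 := by gcongr with i _ j _; exact h i j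
    _ = ∑ i, ∑ j, G i j := by
      simp only [add_div, Finset.sum_add_distrib, ← Finset.sum_div]
      rw [Finset.sum_comm (f := fun i j => G j i)]
      ring

section StrengthenedLocal

variable {ι : Type*} {A : Matrix ι ι ℝ}

theorem mul_le_of_one_le_add_sqrt (hA : ∀ i j, 0 ≤ A i j) {w : ℝ} (hw : 0 ≤ w) {i j : ι}
    (hij : 1 ≤ w * √(A i i * A j j) + √(A i j * A j i))
    {r s : ι → ℝ} (hr : ∀ i, 0 ≤ r i) (hs : ∀ i, 0 ≤ s i) :
    r i * s i * (r j * s j) ≤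
      (w * (A i i * (r i * s i) ^ 2 + A j j * (r j * s j) ^ 2)
        + (A i j * (r j * s i) ^ 2 + A j i * (r i * s j) ^ 2)) / 2 := by
  have hu : 0 ≤ r i * s i * (r j * s j) :=
    mul_nonneg (mul_nonneg (hr i) (hs i)) (mul_nonneg (hr j) (hs j))
  have hdiag := Real.sqrt_mul_mul_mul_le_add_div_two (hA i i) (hA j j) (r i * s i) (r j * s j)
  have hoff := Real.sqrt_mul_mul_mul_le_add_div_two (hA i j) (hA j i) (r j * s i) (r i * s j)
  calc r i * s i * (r j * s j)
      ≤ (w * √(A i i * A j j) + √(A i j * A j i)) * (r i * s i * (r j * s j)) :=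
        le_mul_of_one_le_left hu hij
    _ = w * (√(A i i * A j j) * (r i * s i * (r j * s j)))
          + √(A i j * A j i) * (r j * s i * (r i * s j)) := by ring
    _ ≤ _ := by linarith [mul_le_mul_of_nonneg_left hdiag hw]

variable [Fintype ι] [DecidableEq ι]

theorem sq_sum_mul_le_of_strengthened_local (hA : ∀ i j, 0 ≤ A i j)
    (h : ∀ i j, i ≠ j →
      1 ≤ 1 / ((Fintype.card ι : ℝ) - 1) * √(A i i * A j j) + √(A i j * A j i))
    {r s : ι → ℝ} (hr : ∀ i, 0 ≤ r i) (hs : ∀ i, 0 ≤ s i) :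
    (∑ i, r i * s i) ^ 2 ≤ ∑ i, (∑ j, (A i j + if i = j then 1 else 0) * r j ^ 2) * s i ^ 2 := by
  set w := 1 / ((Fintype.card ι : ℝ) - 1)
  -- the diagonal weight `A i i` of row `i` is spread evenly over its `card ι - 1` other entries
  let G : ι → ι → ℝ := fun i j =>
    if i = j then (r i * s i) ^ 2 else w * A i i * (r i * s i) ^ 2 + A i j * (r j * s i) ^ 2
  have hG : ∀ i j, r i * s i * (r j * s j) ≤ (G i j + G j i) / 2 := by
    intro i j
    rcases eq_or_ne i j with rfl | hij
    · simp [G, sq]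
    · have hw : 0 ≤ w := one_div_nonneg.mpr <| sub_nonneg.mpr <| by
        exact_mod_cast Fintype.card_pos_iff.mpr ⟨i⟩
      simp only [G, if_neg hij, if_neg hij.symm]
      linarith [mul_le_of_one_le_add_sqrt hA hw (h i j hij) hr hs]
  refine (Finset.sq_sum_le_sum_sum_of_mul_le _ G hG).trans (Finset.sum_le_sum fun i _ => ?_)
  have : Nonempty ι := ⟨i⟩
  have hcard : ((Finset.univ.erase i).card : ℝ) * w ≤ 1 := by
    rw [Finset.card_erase_of_mem (Finset.mem_univ i), Finset.card_univ,
      Nat.cast_pred Fintype.card_pos, mul_one_div]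
    exact div_self_le_one _
  have hii : 0 ≤ A i i * (r i * s i) ^ 2 := by have := hA i i; positivity
  have hG_off : ∑ j ∈ Finset.univ.erase i, G i j
      = ∑ j ∈ Finset.univ.erase i, (w * A i i * (r i * s i) ^ 2 + A i j * (r j * s i) ^ 2) :=
    Finset.sum_congr rfl fun j hj => if_neg (Finset.ne_of_mem_erase hj).symm
  have hA_off : ∑ j ∈ Finset.univ.erase i, (A i j + if i = j then 1 else 0) * r j ^ 2 * s i ^ 2
      = ∑ j ∈ Finset.univ.erase i, A i j * (r j * s i) ^ 2 :=
    Finset.sum_congr rfl fun j hj => by rw [if_neg (Finset.ne_of_mem_erase hj).symm]; ring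
  rw [Finset.sum_mul, ← Finset.add_sum_erase _ _ (Finset.mem_univ i),
    ← Finset.add_sum_erase _ _ (Finset.mem_univ i), hG_off, hA_off, Finset.sum_add_distrib,
    Finset.sum_const, nsmul_eq_mul]
  simp only [G, if_pos rfl, if_true]
  nlinarith [mul_le_mul_of_nonneg_right hcard hii]

end StrengthenedLocal

theorem Matrix.PosSemidef.norm_sq_apply_le {𝕜 ι : Type*} [RCLike 𝕜] [Fintype ι]
    {X : Matrix ι ι 𝕜} (hX : X.PosSemidef) (i j : ι) :
    ‖X i j‖ ^ 2 ≤ RCLike.re (X i i) * RCLike.re (X j j) := by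
  have hdet := (hX.submatrix ![i, j]).det_nonneg
  rw [det_fin_two] at hdet
  simp only [submatrix_apply, Matrix.cons_val_zero, Matrix.cons_val_one] at hdet
  rw [← hX.1.apply j i, ← hX.1.coe_re_apply_self i, ← hX.1.coe_re_apply_self j, RCLike.star_def,
    RCLike.mul_conj, sub_nonneg, ← RCLike.ofReal_mul, ← RCLike.ofReal_pow] at hdet
  exact RCLike.ofReal_le_ofReal.mp hdet

theorem Matrix.PosSemidef.norm_apply_le {𝕜 ι : Type*} [RCLike 𝕜] [Fintype ι]
    {X : Matrix ι ι 𝕜} (hX : X.PosSemidef) (i j : ι) :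
    ‖X i j‖ ≤ √(RCLike.re (X i i)) * √(RCLike.re (X j j)) := by
  rw [← Real.sqrt_mul' _ (RCLike.nonneg_iff.mp hX.diag_nonneg).1, ← Real.sqrt_sq (norm_nonneg _)]
  exact Real.sqrt_le_sqrt (hX.norm_sq_apply_le i j)

theorem Matrix.PosSemidef.re_dotProduct_mulVec_le {𝕜 ι : Type*} [RCLike 𝕜] [Fintype ι]
    {X : Matrix ι ι 𝕜} (hX : X.PosSemidef) (y : ι → 𝕜) :
    RCLike.re (star y ⬝ᵥ (X *ᵥ y)) ≤ (∑ i, √(RCLike.re (X i i)) * ‖y i‖) ^ 2 := by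
  calc RCLike.re (star y ⬝ᵥ (X *ᵥ y)) = ∑ i, ∑ j, RCLike.re (star (y i) * (X i j * y j)) := by
        simp [dotProduct, mulVec, Finset.mul_sum]
    _ ≤ ∑ i, ∑ j, ‖y i‖ * (‖X i j‖ * ‖y j‖) := by
        gcongr with i _ j _
        exact (RCLike.re_le_norm _).trans_eq (by simp)
    _ ≤ ∑ i, ∑ j, ‖y i‖ * ((√(RCLike.re (X i i)) * √(RCLike.re (X j j))) * ‖y j‖) := by
        gcongr with i _ j _
        exact hX.norm_apply_le i j
    _ = (∑ i, √(RCLike.re (X i i)) * ‖y i‖) ^ 2 := by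
        rw [sq, Finset.sum_mul_sum]
        congr! 2 with i _ j _
        ring

theorem re_dotProduct_diagonal_ofReal_mulVec {𝕜 ι : Type*} [RCLike 𝕜] [Fintype ι]
    [DecidableEq ι] (d : ι → ℝ) (y : ι → 𝕜) :
    RCLike.re (star y ⬝ᵥ (diagonal (fun i => (d i : 𝕜)) *ᵥ y)) = ∑ i, d i * ‖y i‖ ^ 2 := by
  simp only [dotProduct, mulVec_diagonal, Pi.star_apply, map_sum]
  refine Finset.sum_congr rfl fun i _ => ?_
  rw [mul_left_comm, RCLike.star_def, RCLike.conj_mul, ← RCLike.ofReal_pow,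
    ← RCLike.ofReal_mul, RCLike.ofReal_re]

theorem deltaMap_eq_diagonal_ofReal {n : ℕ} (A : Matrix (Fin n) (Fin n) ℝ)
    {X : Matrix (Fin n) (Fin n) ℂ} (hX : X.IsHermitian) :
    DeltaMap A X =
      diagonal fun i => ((∑ j, (A i j + if i = j then 1 else 0) * (X j j).re : ℝ) : ℂ) := by
  unfold DeltaMap
  congr! 2 with i
  push_cast
  refine Finset.sum_congr rfl fun j _ => ?_
  rw [Complex.conj_eq_iff_re.mp (hX.apply j j)]
  split_ifs <;> simp

theorem isHermitian_phiDelta {n : ℕ} (A : Matrix (Fin n) (Fin n) ℝ)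
    {X : Matrix (Fin n) (Fin n) ℂ} (hX : X.IsHermitian) : (PhiDelta A X).IsHermitian := by
  refine IsHermitian.sub ?_ hX
  rw [deltaMap_eq_diagonal_ofReal A hX, isHermitian_diagonal_iff]
  exact fun i => Complex.conj_ofReal _

theorem phiDelta_pos_of_strengthened_local_general (n : ℕ)
    (A : Matrix (Fin n) (Fin n) ℝ) (hA : ∀ i j, 0 ≤ A i j)
    (h : ∀ i j, i ≠ j →
      1 ≤ (1 / ((n : ℝ) - 1)) * Real.sqrt (A i i * A j j) + Real.sqrt (A i j * A j i)) :
    IsPosMap (PhiDelta A) := by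
  intro X hX
  have hH := isHermitian_phiDelta A hX.1
  refine .of_dotProduct_mulVec_nonneg hH fun y => Complex.nonneg_iff.mpr
    ⟨?_, (hH.im_star_dotProduct_mulVec_self y).symm⟩
  have hdiag : ∀ j, √(X j j).re ^ 2 = (X j j).re := fun j =>
    Real.sq_sqrt (Complex.nonneg_iff.mp hX.diag_nonneg).1
  have key := sq_sum_mul_le_of_strengthened_local hA (by simpa only [Fintype.card_fin] using h)
    (r := fun j => √(X j j).re) (s := fun i => ‖y i‖) (fun _ => Real.sqrt_nonneg _)
    (fun _ => norm_nonneg _)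
  simp only [hdiag] at key
  rw [PhiDelta, sub_mulVec, dotProduct_sub, Complex.sub_re, sub_nonneg,
    deltaMap_eq_diagonal_ofReal A hX.1]
  exact (hX.re_dotProduct_mulVec_le y).trans
    (key.trans_eq (re_dotProduct_diagonal_ofReal_mulVec _ y).symm)

/-- If `n ≥ 2` and `(1/(n-1))√(a_{ii}a_{jj}) + √(a_{ij}a_{ji}) ≥ 1` for all
`i ≠ j`, then `Φ_A(X) = Δ_A(X) - X` is positive. -/
theorem phiDelta_pos_of_strengthened_local (n : ℕ) (hn : 2 ≤ n)
    (A : Matrix (Fin n) (Fin n) ℝ) (hA : ∀ i j, 0 ≤ A i j)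
    (h : ∀ i j, i ≠ j →
      1 ≤ (1 / ((n : ℝ) - 1)) * Real.sqrt (A i i * A j j) + Real.sqrt (A i j * A j i)) :
    IsPosMap (PhiDelta A) :=
  phiDelta_pos_of_strengthened_local_general n A hA h
end
end
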